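/- arXiv:2601.08561 — 2 statements merged into one kernel-verified Lean document; each statement's English description precedes it below -/
import Mathlib

section
/- Let (Ω¹,μ₁) and (Ω²,μ₂) be compact subsets of ℝ^d with probability measures, let 1 ≤ q ≤ ∞ with q' := q/(q−1), and let K(x,y) be a measurable kernel on Ω¹×Ω² such that K(z,·) ∈ L_{q'}(Ω²,μ₂) for every z ∈ Ω¹. Then for every m ∈ ℕ, ϱ_m(W^K_q, L_∞(Ω¹)) = σ_m(K, 𝓛𝓚(∞,q'))_{L*_{∞,q'}}, i.e., the linear sampling recovery error of W^K_q in the uniform norm equals the infimum over points ξ¹,…,ξ^m ∈ Ω¹ and functions ψ₁,…,ψ_m of sup_{x∈Ω¹} ‖K(x,·) − ∑_{j=1}^m ψ_j(x)K(ξ^j,·)‖_{L_{q'}(Ω²,μ₂)}. -/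
/-!
For fixed sampling points `ξ`, a linear recovery map `Φ` is the same datum as the functions
`ψ_j = Φ(e_j)`, and for `f = ∫ K(·,y) φ(y) dμ₂(y)` its error at `x` is `∫ g_x φ dμ₂` with
`g_x = K(x,·) − ∑_j ψ_j(x) K(ξ^j,·)`. After exchanging the suprema over `φ` and `x`, both sides
agree because the `L_{q'}` norm is a dual norm: `‖g‖_{q'} = sup_{‖φ‖_q ≤ 1} |∫ g φ|`. Hölder gives
one inequality; for the other, test `g` against `conj(g) |g|^{q'-2}`, normalized in `L_q`, or, when
`q' = ∞` and the supremum need not be attained, against `conj(g)/|g|` on the sets `{|g| > c}`.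
-/

open MeasureTheory ENNReal

noncomputable def conjSign (z : ℂ) : ℂ := starRingEnd ℂ z / ‖z‖

lemma mul_conjSign (z : ℂ) : z * conjSign z = ‖z‖ := by
  rcases eq_or_ne z 0 with rfl | hz
  · simp [conjSign]
  · have : (‖z‖ : ℂ) ≠ 0 := by exact_mod_cast norm_ne_zero_iff.mpr hz
    rw [conjSign, mul_div_assoc', Complex.mul_conj', div_eq_iff this, sq]

lemma norm_conjSign_le (z : ℂ) : ‖conjSign z‖ ≤ 1 := by
  rw [conjSign, norm_div, RCLike.norm_conj, Complex.norm_real, Real.norm_of_nonneg (norm_nonneg z)]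
  exact div_self_le_one _

@[fun_prop]
lemma measurable_conjSign : Measurable conjSign := by
  unfold conjSign; fun_prop

section Duality

variable {α : Type*} [MeasurableSpace α] {μ : Measure α}

def measurableUnitBall (p : ℝ≥0∞) (μ : Measure α) : Set (α → ℂ) :=
  {φ | Measurable φ ∧ eLpNorm φ p μ ≤ 1}

lemma memLp_of_mem_measurableUnitBall {p : ℝ≥0∞} {φ : α → ℂ} (hφ : φ ∈ measurableUnitBall p μ) :
    MemLp φ p μ :=
  ⟨hφ.1.aestronglyMeasurable, hφ.2.trans_lt one_lt_top⟩

lemma enorm_integral_mul_le_eLpNorm_mul_eLpNorm {p q : ℝ≥0∞} [HolderConjugate p q]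
    {g φ : α → ℂ} (hg : AEStronglyMeasurable g μ) (hφ : AEStronglyMeasurable φ μ) :
    ‖∫ y, g y * φ y ∂μ‖ₑ ≤ eLpNorm g q μ * eLpNorm φ p μ :=
  calc ‖∫ y, g y * φ y ∂μ‖ₑ ≤ ∫⁻ y, ‖φ y • g y‖ₑ ∂μ := by
        simpa only [smul_eq_mul, mul_comm] using enorm_integral_le_lintegral_enorm _
    _ = eLpNorm (φ • g) 1 μ := eLpNorm_one_eq_lintegral_enorm.symm
    _ ≤ eLpNorm φ p μ * eLpNorm g q μ := eLpNorm_smul_le_mul_eLpNorm hg hφ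
    _ = _ := mul_comm _ _

lemma eLpNorm_conjSign_mul_le {g : α → ℂ} {w : α → ℝ} (hw : 0 ≤ w) (p : ℝ≥0∞) :
    eLpNorm (fun y => conjSign (g y) * w y) p μ ≤ eLpNorm w p μ :=
  eLpNorm_mono_real fun y => by
    rw [norm_mul, Complex.norm_real, Real.norm_of_nonneg (hw y)]
    exact mul_le_of_le_one_left (hw y) (norm_conjSign_le _)

lemma enorm_integral_mul_conjSign_mul {g : α → ℂ} {w : α → ℝ} (hw : 0 ≤ w)
    (hint : Integrable (fun y => g y * (conjSign (g y) * w y)) μ) :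
    ‖∫ y, g y * (conjSign (g y) * w y) ∂μ‖ₑ = ∫⁻ y, ‖g y‖ₑ * ENNReal.ofReal (w y) ∂μ := by
  have hreal : ∀ y, g y * (conjSign (g y) * w y) = ((‖g y‖ * w y : ℝ) : ℂ) := fun y => by
    rw [← mul_assoc, mul_conjSign, Complex.ofReal_mul]
  have hnonneg : 0 ≤ fun y => ‖g y‖ * w y := fun y => mul_nonneg (norm_nonneg _) (hw y)
  have hint' : Integrable (fun y => ‖g y‖ * w y) μ := by
    refine hint.norm.congr (.of_forall fun y => ?_)
    simp only [hreal, Complex.norm_real, Real.norm_of_nonneg (hnonneg y)]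
  simp_rw [hreal, integral_complex_ofReal, ← ofReal_norm, Complex.norm_real,
    Real.norm_of_nonneg (integral_nonneg hnonneg), ofReal_integral_eq_lintegral_ofReal hint'
    (.of_forall hnonneg), ENNReal.ofReal_mul (norm_nonneg _)]

lemma enorm_integral_mul_div_eLpNorm_le_iSup {p : ℝ≥0∞} (hp : p ≠ 0) (g : α → ℂ)
    {φ₀ : α → ℂ} (hφ₀ : Measurable φ₀) :
    ‖∫ y, g y * φ₀ y ∂μ‖ₑ / eLpNorm φ₀ p μ ≤
      ⨆ φ ∈ measurableUnitBall p μ, ‖∫ y, g y * φ y ∂μ‖ₑ := by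
  set N := eLpNorm φ₀ p μ
  rcases eq_or_ne N 0 with hN0 | hN0
  · have hφ₀ : φ₀ =ᵐ[μ] 0 := (eLpNorm_eq_zero_iff hφ₀.aestronglyMeasurable hp).mp hN0
    have : ∫ y, g y * φ₀ y ∂μ = 0 :=
      integral_eq_zero_of_ae (hφ₀.mono fun y hy => by simp [hy])
    simp [this]
  rcases eq_or_ne N ∞ with hNtop | hNtop
  · simp [hNtop]
  set c : ℂ := ((N.toReal⁻¹ : ℝ) : ℂ)
  have hc : ‖c‖ₑ = N⁻¹ := by
    rw [← ofReal_norm, Complex.norm_real, Real.norm_of_nonneg (by positivity),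
      ENNReal.ofReal_inv_of_pos (ENNReal.toReal_pos hN0 hNtop), ofReal_toReal hNtop]
  have hball : c • φ₀ ∈ measurableUnitBall p μ :=
    ⟨hφ₀.const_smul c, by rw [eLpNorm_const_smul, hc, ENNReal.inv_mul_cancel hN0 hNtop]⟩
  calc ‖∫ y, g y * φ₀ y ∂μ‖ₑ / N = ‖∫ y, g y * (c • φ₀) y ∂μ‖ₑ := by
        simp_rw [Pi.smul_apply, smul_eq_mul, mul_left_comm (g _), integral_const_mul, enorm_mul,
          hc, ENNReal.div_eq_inv_mul]
    _ ≤ _ := le_iSup₂ (f := fun φ _ => ‖∫ y, g y * φ y ∂μ‖ₑ) _ hball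

lemma eLpNorm_one_le_iSup_enorm_integral_mul {g : α → ℂ} (hgm : Measurable g) (hg : MemLp g 1 μ) :
    eLpNorm g 1 μ ≤ ⨆ φ ∈ measurableUnitBall ∞ μ, ‖∫ y, g y * φ y ∂μ‖ₑ := by
  set φ₀ : α → ℂ := fun y => conjSign (g y) * (1 : ℝ)
  have hφ₀ : φ₀ ∈ measurableUnitBall ∞ μ := by
    refine ⟨by fun_prop, (eLpNorm_conjSign_mul_le (fun _ => zero_le_one) ∞).trans ?_⟩
    exact (eLpNorm_le_of_ae_bound (C := 1) (.of_forall fun _ => by simp)).trans (by simp)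
  have hint : Integrable (fun y => g y * φ₀ y) μ :=
    hg.integrable_mul (memLp_of_mem_measurableUnitBall hφ₀)
  calc eLpNorm g 1 μ = ‖∫ y, g y * φ₀ y ∂μ‖ₑ := by
        rw [enorm_integral_mul_conjSign_mul (fun _ => zero_le_one) hint,
          eLpNorm_one_eq_lintegral_enorm]
        simp
    _ ≤ _ := le_iSup₂ (f := fun φ _ => ‖∫ y, g y * φ y ∂μ‖ₑ) _ hφ₀

lemma eLpNorm_top_le_iSup_enorm_integral_mul [IsFiniteMeasure μ] {g : α → ℂ} (hgm : Measurable g)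
    (hg : MemLp g ∞ μ) :
    eLpNorm g ∞ μ ≤ ⨆ φ ∈ measurableUnitBall 1 μ, ‖∫ y, g y * φ y ∂μ‖ₑ := by
  refine le_of_forall_lt_imp_le_of_dense fun c hc => ?_
  set A := {y | c < ‖g y‖ₑ}
  have hA : MeasurableSet A := measurableSet_lt measurable_const hgm.enorm
  have hA0 : μ A ≠ 0 := by
    intro hA0
    refine hc.not_ge ?_
    rw [eLpNorm_exponent_top]
    exact essSup_le_of_ae_le c
      (measure_eq_zero_iff_ae_notMem.mp hA0 |>.mono fun y hy => not_lt.mp hy)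
  set w : α → ℝ := A.indicator 1
  have hw : 0 ≤ w := Set.indicator_nonneg fun _ _ => zero_le_one
  set φ₀ : α → ℂ := fun y => conjSign (g y) * w y
  have hφ₀ : eLpNorm φ₀ 1 μ ≤ μ A := by
    refine (eLpNorm_conjSign_mul_le hw 1).trans ?_
    simp [w, Pi.one_def, eLpNorm_indicator_const hA]
  have hint : Integrable (fun y => g y * φ₀ y) μ :=
    hg.integrable_mul ⟨by fun_prop, hφ₀.trans_lt (measure_lt_top μ A)⟩
  have hlow : c * μ A ≤ ‖∫ y, g y * φ₀ y ∂μ‖ₑ := by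
    rw [enorm_integral_mul_conjSign_mul hw hint, ← lintegral_indicator_one hA,
      ← lintegral_const_mul _ (measurable_one.indicator hA)]
    refine lintegral_mono fun y => ?_
    by_cases hy : y ∈ A
    · simpa [w, hy] using hy.le
    · simp [w, hy]
  calc c = c * μ A / μ A := (ENNReal.mul_div_cancel_right hA0 (measure_ne_top μ A)).symm
    _ ≤ ‖∫ y, g y * φ₀ y ∂μ‖ₑ / eLpNorm φ₀ 1 μ := ENNReal.div_le_div hlow hφ₀
    _ ≤ _ := enorm_integral_mul_div_eLpNorm_le_iSup one_ne_zero g (by fun_prop)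

lemma eLpNorm_le_iSup_enorm_integral_mul_of_ne_top {p q : ℝ≥0∞} [HolderConjugate p q] (hp : p ≠ ∞)
    (hq : q ≠ ∞) {g : α → ℂ} (hgm : Measurable g) (hg : MemLp g q μ) :
    eLpNorm g q μ ≤ ⨆ φ ∈ measurableUnitBall p μ, ‖∫ y, g y * φ y ∂μ‖ₑ := by
  have hpq := HolderConjugate.toReal_of_ne_top hq hp
  set s := q.toReal
  set N := eLpNorm g q μ
  rcases eq_or_ne N 0 with hN0 | hN0
  · simp [hN0]
  have hNtop : N ≠ ∞ := hg.eLpNorm_ne_top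
  have hs : 0 ≤ s - 1 := by linarith [hpq.lt]
  set w : α → ℝ := fun y => ‖g y‖ ^ (s - 1)
  have hw : 0 ≤ w := fun y => by positivity
  set φ₀ : α → ℂ := fun y => conjSign (g y) * w y
  have hexp : p * ENNReal.ofReal (s - 1) = q := by
    rw [← ofReal_toReal hp, ← ENNReal.ofReal_mul toReal_nonneg, mul_comm, hpq.sub_one_mul_conj,
      ofReal_toReal hq]
  have hφ₀ : eLpNorm φ₀ p μ ≤ N ^ (s - 1) := by
    refine (eLpNorm_conjSign_mul_le hw p).trans_eq ?_
    rw [eLpNorm_norm_rpow g (by linarith [hpq.lt]), hexp]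
  have hint : Integrable (fun y => g y * φ₀ y) μ :=
    hg.integrable_mul ⟨by fun_prop, hφ₀.trans_lt (rpow_lt_top_of_nonneg hs hNtop)⟩
  have hsplit : ∀ x : ℝ≥0∞, x ^ s = x * x ^ (s - 1) := fun x => by
    simpa using ENNReal.rpow_add_of_nonneg (x := x) 1 (s - 1) zero_le_one hs
  have hI : ‖∫ y, g y * φ₀ y ∂μ‖ₑ = N ^ s := by
    have hN : N = eLpNorm' g s μ := eLpNorm_eq_eLpNorm' (HolderConjugate.ne_zero q p) hq
    rw [enorm_integral_mul_conjSign_mul hw hint, hN,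
      ← lintegral_rpow_enorm_eq_rpow_eLpNorm' (by linarith [hpq.lt])]
    refine lintegral_congr fun y => ?_
    rw [hsplit, ← ofReal_norm, ENNReal.ofReal_rpow_of_nonneg (norm_nonneg _) hs]
  calc N = N ^ s / N ^ (s - 1) := by
        rw [hsplit, ENNReal.mul_div_cancel_right (rpow_pos (pos_iff_ne_zero.mpr hN0) hNtop).ne'
          (rpow_ne_top_of_nonneg hs hNtop)]
    _ ≤ ‖∫ y, g y * φ₀ y ∂μ‖ₑ / eLpNorm φ₀ p μ := by rw [hI]; exact ENNReal.div_le_div_left hφ₀ _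
    _ ≤ _ := enorm_integral_mul_div_eLpNorm_le_iSup (HolderConjugate.ne_zero p q) g (by fun_prop)

theorem eLpNorm_eq_iSup_enorm_integral_mul [IsFiniteMeasure μ] {p q : ℝ≥0∞} [HolderConjugate p q]
    {g : α → ℂ} (hg : MemLp g q μ) :
    eLpNorm g q μ = ⨆ φ ∈ measurableUnitBall p μ, ‖∫ y, g y * φ y ∂μ‖ₑ := by
  refine le_antisymm ?_ (iSup₂_le fun φ hφ => ?_)
  · obtain ⟨g', hg'm, hgg'⟩ : ∃ g', Measurable g' ∧ g =ᵐ[μ] g' :=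
      ⟨hg.1.mk g, hg.1.stronglyMeasurable_mk.measurable, hg.1.ae_eq_mk⟩
    have hint (φ : α → ℂ) : ∫ y, g y * φ y ∂μ = ∫ y, g' y * φ y ∂μ :=
      integral_congr_ae (hgg'.mono fun y hy => by simp only [hy])
    rw [eLpNorm_congr_ae hgg']
    simp_rw [hint]
    replace hg := (memLp_congr_ae hgg').mp hg
    rcases eq_or_ne q ∞ with rfl | hq
    · obtain rfl : p = 1 := (HolderConjugate.eq_top_iff_eq_one ∞ p).mp rfl
      exact eLpNorm_top_le_iSup_enorm_integral_mul hg'm hg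
    rcases eq_or_ne q 1 with rfl | hq1
    · obtain rfl : p = ∞ := (HolderConjugate.eq_top_iff_eq_one p 1).mpr rfl
      exact eLpNorm_one_le_iSup_enorm_integral_mul hg'm hg
    exact eLpNorm_le_iSup_enorm_integral_mul_of_ne_top
      ((HolderConjugate.ne_top_iff_ne_one p q).mpr hq1) hq hg'm hg
  · calc ‖∫ y, g y * φ y ∂μ‖ₑ ≤ eLpNorm g q μ * eLpNorm φ p μ :=
        enorm_integral_mul_le_eLpNorm_mul_eLpNorm hg.1 hφ.1.aestronglyMeasurable
      _ ≤ eLpNorm g q μ := mul_le_of_le_one_right' hφ.2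

end Duality

lemma integral_sub_sum_mul_mul {Y ι : Type*} [MeasurableSpace Y] {ν : Measure Y}
    (s : Finset ι) (c : ι → ℂ) {g₀ φ : Y → ℂ} {g : ι → Y → ℂ}
    (h₀ : Integrable (fun y => g₀ y * φ y) ν) (h : ∀ i, Integrable (fun y => g i y * φ y) ν) :
    ∫ y, (g₀ y - ∑ i ∈ s, c i * g i y) * φ y ∂ν =
      ∫ y, g₀ y * φ y ∂ν - ∑ i ∈ s, c i * ∫ y, g i y * φ y ∂ν := by
  have hc (i : ι) : Integrable (fun y => c i * (g i y * φ y)) ν := (h i).const_mul (c i)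
  simp_rw [sub_mul, Finset.sum_mul, mul_assoc]
  rw [integral_sub h₀ (integrable_finsetSum _ fun i _ => hc i),
    integral_finsetSum _ fun i _ => hc i]
  simp_rw [integral_const_mul]

section Kernel

variable {X Y : Type*} [MeasurableSpace Y] {ν : Measure Y}

def kernelClass (K : X → Y → ℂ) (p : ℝ≥0∞) (ν : Measure Y) : Set (X → ℂ) :=
  (fun φ x => ∫ y, K x y * φ y ∂ν) '' measurableUnitBall p ν

lemma iSup_kernelClass_enorm_sub_sum_eq [IsFiniteMeasure ν] {p q : ℝ≥0∞} [HolderConjugate p q]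
    {K : X → Y → ℂ} (hK : ∀ z, MemLp (K z) q ν) {m : ℕ} (ξ : Fin m → X) (ψ : Fin m → X → ℂ) :
    ⨆ f ∈ kernelClass K p ν, ⨆ x, ‖f x - ∑ j, f (ξ j) * ψ j x‖ₑ =
      ⨆ x, eLpNorm (fun y => K x y - ∑ j, ψ j x * K (ξ j) y) q ν := by
  have herr : ∀ φ ∈ measurableUnitBall p ν, ∀ x,
      ‖∫ y, K x y * φ y ∂ν - ∑ j, (∫ y, K (ξ j) y * φ y ∂ν) * ψ j x‖ₑ =
        ‖∫ y, (K x y - ∑ j, ψ j x * K (ξ j) y) * φ y ∂ν‖ₑ := fun φ hφ x => by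
    have hφ := memLp_of_mem_measurableUnitBall hφ
    rw [integral_sub_sum_mul_mul _ _ ((hK x).integrable_mul hφ)
      fun j => (hK (ξ j)).integrable_mul hφ]
    simp_rw [mul_comm]
  have hres (x : X) : MemLp (fun y => K x y - ∑ j, ψ j x * K (ξ j) y) q ν :=
    (hK x).sub (memLp_finsetSum _ fun j _ => (hK (ξ j)).const_mul (ψ j x))
  calc _ = ⨆ φ ∈ measurableUnitBall p ν, ⨆ x,
        ‖∫ y, (K x y - ∑ j, ψ j x * K (ξ j) y) * φ y ∂ν‖ₑ := by
        rw [kernelClass, iSup_image]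
        exact biSup_congr fun φ hφ => iSup_congr (herr φ hφ)
    _ = ⨆ x, ⨆ φ ∈ measurableUnitBall p ν, ‖∫ y, (K x y - ∑ j, ψ j x * K (ξ j) y) * φ y ∂ν‖ₑ := by
        simp only [iSup_comm (ι' := X)]
    _ = _ := iSup_congr fun x => (eLpNorm_eq_iSup_enorm_integral_mul (hres x)).symm

end Kernel

theorem statement10_general (d : ℕ) (Ω₁ Ω₂ : Set (Fin d → ℝ))
    (μ₂ : Measure Ω₂) [IsProbabilityMeasure μ₂]
    (q q' : ℝ≥0∞) (hq' : q⁻¹ + q'⁻¹ = 1)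
    (K : Ω₁ → Ω₂ → ℂ)
    (hKq' : ∀ z : Ω₁, MemLp (fun y => K z y) q' μ₂)
    (m : ℕ) :
    (⨅ (ξ : Fin m → Ω₁) (Φ : (Fin m → ℂ) →ₗ[ℂ] (Ω₁ → ℂ)),
      ⨆ f ∈ {f : Ω₁ → ℂ | ∃ φ : Ω₂ → ℂ, Measurable φ ∧ eLpNorm φ q μ₂ ≤ 1 ∧
               ∀ x : Ω₁, f x = ∫ y, K x y * φ y ∂μ₂},
        ⨆ x : Ω₁, (‖f x - Φ (fun j => f (ξ j)) x‖₊ : ℝ≥0∞)) =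
    ⨅ (ξ : Fin m → Ω₁) (ψ : Fin m → Ω₁ → ℂ),
      ⨆ x : Ω₁, eLpNorm (fun y => K x y - ∑ j, ψ j x * K (ξ j) y) q' μ₂ := by
  have : HolderConjugate q q' := holderConjugate_iff.mpr hq'
  have hW : {f : Ω₁ → ℂ | ∃ φ : Ω₂ → ℂ, Measurable φ ∧ eLpNorm φ q μ₂ ≤ 1 ∧
      ∀ x : Ω₁, f x = ∫ y, K x y * φ y ∂μ₂} = kernelClass K q μ₂ := by
    ext f
    simp [kernelClass, measurableUnitBall, funext_iff, eq_comm, and_assoc]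
  rw [hW]
  refine iInf_congr fun ξ =>
    (Equiv.iInf_congr (LinearEquiv.piRing ℂ (Ω₁ → ℂ) (Fin m) ℂ).symm.toEquiv fun ψ => ?_).symm
  simp_rw [← enorm_eq_nnnorm, LinearEquiv.coe_toEquiv, LinearEquiv.piRing_symm_apply,
    Finset.sum_apply, Pi.smul_apply, smul_eq_mul]
  exact iSup_kernelClass_enorm_sub_sum_eq hKq' ξ ψ

/-- Proposition 4.2 of the paper. Let `Ω¹, Ω²` be compact subsets of
`ℝ^d` with probability measures `μ₁, μ₂`, `1 ≤ q ≤ ∞`, `q'` the conjugate exponent of `q`,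
and `K` a measurable kernel with `K(z,·) ∈ L_{q'}(μ₂)` for all `z`.  Then the linear
sampling recovery error of `W^K_q` in the uniform norm equals the infimum over points
`ξ¹,…,ξ^m ∈ Ω¹` and functions `ψ₁,…,ψ_m` of
`sup_{x∈Ω¹} ‖K(x,·) − ∑_j ψ_j(x)K(ξ^j,·)‖_{L_{q'}(μ₂)}`. -/
theorem statement10 (d : ℕ) (Ω₁ Ω₂ : Set (Fin d → ℝ))
    (hΩ₁ : IsCompact Ω₁) (hΩ₂ : IsCompact Ω₂)
    (μ₁ : Measure Ω₁) (μ₂ : Measure Ω₂)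
    [IsProbabilityMeasure μ₁] [IsProbabilityMeasure μ₂]
    (q q' : ℝ≥0∞) (hq : 1 ≤ q) (hq' : q⁻¹ + q'⁻¹ = 1)
    (K : Ω₁ → Ω₂ → ℂ) (hK : Measurable (Function.uncurry K))
    (hKq' : ∀ z : Ω₁, MemLp (fun y => K z y) q' μ₂)
    (m : ℕ) :
    (⨅ (ξ : Fin m → Ω₁) (Φ : (Fin m → ℂ) →ₗ[ℂ] (Ω₁ → ℂ)),
      ⨆ f ∈ {f : Ω₁ → ℂ | ∃ φ : Ω₂ → ℂ, Measurable φ ∧ eLpNorm φ q μ₂ ≤ 1 ∧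
               ∀ x : Ω₁, f x = ∫ y, K x y * φ y ∂μ₂},
        ⨆ x : Ω₁, (‖f x - Φ (fun j => f (ξ j)) x‖₊ : ℝ≥0∞)) =
    ⨅ (ξ : Fin m → Ω₁) (ψ : Fin m → Ω₁ → ℂ),
      ⨆ x : Ω₁, eLpNorm (fun y => K x y - ∑ j, ψ j x * K (ξ j) y) q' μ₂ :=
  statement10_general d Ω₁ Ω₂ μ₂ q q' hq' K hKq' m
end

section
/- Let n ≥ 1 and let I_n be the trigonometric interpolation operator I_n(f)(x) := (2n+1)^{-1}∑_{j=0}^{2n} f(x^j)𝒟_n(x − x^j) with nodes x^j := 2πj/(2n+1), where 𝒟_n is the Dirichlet kernel. There exists an absolute constant C such that for every continuous 2π-periodic function f, ‖f − I_n(f)‖_∞ ≤ C·ln(n+1)·E_n(f)_∞, where E_n(f)_∞ := inf{‖f − t‖_∞ : t a trigonometric polynomial of degree ≤ n}. -/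
open MeasureTheory Filter Finset
open scoped ENNReal NNReal

noncomputable section

/-- Normalized Lebesgue measure on one period of the torus `𝕋 = ℝ/(2πℤ)`. -/
def μT : Measure ℝ :=
  (ENNReal.ofReal (2 * Real.pi))⁻¹ • (MeasureTheory.volume.restrict (Set.Ioc 0 (2 * Real.pi)))

/-- `L_p` norm (with values in `ℝ≥0∞`) with respect to the normalized measure on the torus. -/
def lpNorm (p : ℝ≥0∞) (f : ℝ → ℂ) : ℝ≥0∞ := eLpNorm f p μT

/-- Mixed (vector) norm `‖f‖_{p₁,p₂}` : first the `L_{p₁}` norm in the first variable,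
then the `L_{p₂}` norm in the second variable. -/
def lpNorm2 (p₁ p₂ : ℝ≥0∞) (f : ℝ → ℝ → ℂ) : ℝ≥0∞ :=
  eLpNorm (fun y => (eLpNorm (fun x => f x y) p₁ μT).toReal) p₂ μT

/-- The Bernoulli kernel `F_a(x) = 1 + 2∑_{k≥1} k^{-a} cos(kx - aπ/2)`, the series being
interpreted as the limit of its partial sums. -/
def bern (a : ℝ) (x : ℝ) : ℝ :=
  1 + 2 * limUnder atTop (fun N : ℕ =>
    ∑ k ∈ Finset.range N, ((k : ℝ) + 1) ^ (-a) * Real.cos (((k : ℝ) + 1) * x - a * Real.pi / 2))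

/-- The generalized Bernoulli kernel `F_{a,α}(x) = 1 + 2∑_{k≥1} k^{-a} cos(kx - απ/2)`. -/
def bernGen (a α : ℝ) (x : ℝ) : ℝ :=
  1 + 2 * limUnder atTop (fun N : ℕ =>
    ∑ k ∈ Finset.range N, ((k : ℝ) + 1) ^ (-a) * Real.cos (((k : ℝ) + 1) * x - α * Real.pi / 2))

/-- Two-variable class `W^{(r₁,r₂)}_{(q₁,q₂)}` : normalized convolutions of the product
Bernoulli kernel `F_{r₁}(x)F_{r₂}(y)` with functions `φ` with `‖φ‖_{q₁,q₂} ≤ 1`. -/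
def Wcl (r₁ r₂ : ℝ) (q₁ q₂ : ℝ≥0∞) : Set (ℝ → ℝ → ℂ) :=
  {K | ∃ φ : ℝ → ℝ → ℂ, Measurable (Function.uncurry φ) ∧ lpNorm2 q₁ q₂ φ ≤ 1 ∧
        ∀ x y, K x y = ∫ u, (∫ v, ((bern r₁ (x - u) * bern r₂ (y - v) : ℝ) : ℂ) * φ u v ∂μT) ∂μT}

/-- `l`-th finite difference with step `t` in the first variable. -/
def mdiff1 (l : ℕ) (t : ℝ) (f : ℝ → ℝ → ℂ) : ℝ → ℝ → ℂ :=
  fun x y => ∑ i ∈ Finset.range (l + 1),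
    ((-1 : ℂ)) ^ (l - i) * (Nat.choose l i : ℂ) * f (x + (i : ℝ) * t) y

/-- `l`-th finite difference with step `t` in the second variable. -/
def mdiff2 (l : ℕ) (t : ℝ) (f : ℝ → ℝ → ℂ) : ℝ → ℝ → ℂ :=
  fun x y => ∑ i ∈ Finset.range (l + 1),
    ((-1 : ℂ)) ^ (l - i) * (Nat.choose l i : ℂ) * f x (y + (i : ℝ) * t)

/-- Two-variable class `H^{(r₁,r₂)}_{(q₁,q₂)}` defined via mixed `l`-th differences. -/
def Hcl (l : ℕ) (r₁ r₂ : ℝ) (q₁ q₂ : ℝ≥0∞) : Set (ℝ → ℝ → ℂ) :=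
  {f | Measurable (Function.uncurry f) ∧
       (∀ x y, f (x + 2 * Real.pi) y = f x y ∧ f x (y + 2 * Real.pi) = f x y) ∧
       lpNorm2 q₁ q₂ f ≤ 1 ∧
       (∀ t₁ : ℝ, lpNorm2 q₁ q₂ (mdiff1 l t₁ f) ≤ ENNReal.ofReal (|t₁| ^ r₁)) ∧
       (∀ t₂ : ℝ, lpNorm2 q₁ q₂ (mdiff2 l t₂ f) ≤ ENNReal.ofReal (|t₂| ^ r₂)) ∧
       (∀ t₁ t₂ : ℝ, lpNorm2 q₁ q₂ (mdiff1 l t₁ (mdiff2 l t₂ f)) ≤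
          ENNReal.ofReal (|t₁| ^ r₁ * |t₂| ^ r₂))}

/-- The class `W^K_q` associated with a kernel `K(x,y)` on the torus. -/
def WK (K : ℝ → ℝ → ℂ) (q : ℝ≥0∞) : Set (ℝ → ℂ) :=
  {f | ∃ φ : ℝ → ℂ, Measurable φ ∧ lpNorm q φ ≤ 1 ∧ ∀ x, f x = ∫ y, K x y * φ y ∂μT}

/-- Error of optimal linear sampling recovery `ϱ_m(F, L_p)`. -/
def sampErr (m : ℕ) (F : Set (ℝ → ℂ)) (p : ℝ≥0∞) : ℝ≥0∞ :=
  ⨅ (ξ : Fin m → ℝ) (Φ : (Fin m → ℂ) →ₗ[ℂ] (ℝ → ℂ)),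
    ⨆ f ∈ F, lpNorm p (fun x => f x - Φ (fun j => f (ξ j)) x)

/-- Error of optimal (nonlinear) sampling recovery `ϱ_m^o(F, L_p)`. -/
def sampErrO (m : ℕ) (F : Set (ℝ → ℂ)) (p : ℝ≥0∞) : ℝ≥0∞ :=
  ⨅ (ξ : Fin m → ℝ) (Φ : (Fin m → ℂ) → (ℝ → ℂ)),
    ⨆ f ∈ F, lpNorm p (fun x => f x - Φ (fun j => f (ξ j)) x)

/-- Best `m`-term approximation `σ_m(K, 𝓛𝓚(p₁,p₂))_{p₁,p₂}` of a kernel `K` with respect to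
the adaptive system `𝓛𝓚`, in the vector norm `‖·‖_{p₁,p₂}`. -/
def sigmaLK (m : ℕ) (K : ℝ → ℝ → ℂ) (p₁ p₂ : ℝ≥0∞) : ℝ≥0∞ :=
  ⨅ (ξ : Fin m → ℝ) (ψ : Fin m → ℝ → ℂ),
    lpNorm2 p₁ p₂ (fun x y => K x y - ∑ j, ψ j x * K (ξ j) y)

/-- The Fejér kernel `𝒦_j`. -/
def fejer (j : ℕ) (x : ℝ) : ℂ :=
  ∑ k ∈ Finset.Icc (-(j : ℤ)) (j : ℤ),
    ((1 - |(k : ℝ)| / (j : ℝ) : ℝ) : ℂ) * Complex.exp ((k : ℂ) * (x : ℂ) * Complex.I)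

/-- The de la Vallée Poussin kernel `𝒱_n = 2𝒦_{2n} - 𝒦_n`. -/
def vallee (n : ℕ) (x : ℝ) : ℂ := 2 * fejer (2 * n) x - fejer n x

/-- The kernel `𝒟^{(a,α)}_{2n}(x) = 1 + 2∑_{k=1}^{2n} k^a cos(kx + απ/2)`. -/
def DkerD (n : ℕ) (a α : ℝ) (x : ℝ) : ℝ :=
  1 + 2 * ∑ k ∈ Finset.Icc 1 (2 * n), (k : ℝ) ^ a * Real.cos ((k : ℝ) * x + α * Real.pi / 2)

/-- The operator `I^{(a,α)}g = F_{a,α} ∗ g` (normalized convolution on the torus). -/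
def Iop (a α : ℝ) (g : ℝ → ℂ) (x : ℝ) : ℂ := ∫ z, ((bernGen a α (x - z) : ℝ) : ℂ) * g z ∂μT

/-- The operator `D^{(a,α)}g = 𝒟^{(a,α)}_{2n} ∗ g` (normalized convolution on the torus). -/
def Dop (n : ℕ) (a α : ℝ) (g : ℝ → ℂ) (x : ℝ) : ℂ :=
  ∫ z, ((DkerD n a α (x - z) : ℝ) : ℂ) * g z ∂μT

/-- `D^{(a,α)}` acting in the first variable of a function of two variables. -/
def Dop1 (n : ℕ) (a α : ℝ) (h : ℝ → ℝ → ℂ) (x y : ℝ) : ℂ :=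
  ∫ z, ((DkerD n a α (x - z) : ℝ) : ℂ) * h z y ∂μT

/-- `D^{(b,β)}` acting in the second variable of a function of two variables. -/
def Dop2 (n : ℕ) (b β : ℝ) (h : ℝ → ℝ → ℂ) (x y : ℝ) : ℂ :=
  ∫ z, ((DkerD n b β (y - z) : ℝ) : ℂ) * h x z ∂μT

/-- Trigonometric polynomials of degree at most `N`. -/
def TrigPoly (N : ℕ) : Set (ℝ → ℂ) :=
  {g | ∃ c : ℤ → ℂ, ∀ x : ℝ, g x =
    ∑ k ∈ Finset.Icc (-(N : ℤ)) (N : ℤ), c k * Complex.exp ((k : ℂ) * (x : ℂ) * Complex.I)}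

/-- The Dirichlet kernel `𝒟_n`. -/
def dirich (n : ℕ) (x : ℝ) : ℂ :=
  ∑ k ∈ Finset.Icc (-(n : ℤ)) (n : ℤ), Complex.exp ((k : ℂ) * (x : ℂ) * Complex.I)

/-- The interpolation operator `I_n` with nodes `x^j = 2πj/(2n+1)`. -/
def interp (n : ℕ) (f : ℝ → ℂ) (x : ℝ) : ℂ :=
  ((2 * (n : ℝ) + 1))⁻¹ * ∑ j ∈ Finset.range (2 * n + 1),
    f (2 * Real.pi * (j : ℝ) / (2 * (n : ℝ) + 1)) *
      dirich n (x - 2 * Real.pi * (j : ℝ) / (2 * (n : ℝ) + 1))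

/-- The uniform norm (as an `ℝ≥0∞`-valued supremum). -/
def supNorm (f : ℝ → ℂ) : ℝ≥0∞ := ⨆ x : ℝ, (‖f x‖₊ : ℝ≥0∞)

/-- Univariate class `W^r_q` defined via the Bernoulli kernel `F_r`. -/
def Wuniv (r : ℝ) (q : ℝ≥0∞) : Set (ℝ → ℂ) :=
  {f | ∃ φ : ℝ → ℂ, Measurable φ ∧ lpNorm q φ ≤ 1 ∧
        ∀ x, f x = ∫ z, ((bern r (x - z) : ℝ) : ℂ) * φ z ∂μT}

/-!
`I_n` is a linear operator that reproduces `𝒯(n)`: at the nodes `x^j` the characters `e^{ikx}`,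
`|k| ≤ 2n`, are discretely orthogonal. Hence `f - I_n f = (f - t) - I_n (f - t)` for every
`t ∈ 𝒯(n)`, and `‖f - I_n f‖_∞ ≤ (1 + Λ_n) ‖f - t‖_∞`, where
`Λ_n = sup_x (2n+1)⁻¹ ∑_j |𝒟_n(x - x^j)|` is the Lebesgue constant.
Since `|𝒟_n(u)| ≤ min (2n+1) (1 / |sin (u/2)|)` and the points `x - x^j` reduced mod `2π` are
`s + kh`, `0 ≤ s < h = 2π/(2n+1)`, the `k`-th one contributes at most
`(2n+1) (1/(k+1) + 1/(2n+1-k))`, so `Λ_n ≤ 2 H_{2n+1} ≤ 2 (1 + ln (2n+1))`.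
-/

open Real

lemma dirich_neg (n : ℕ) (x : ℝ) : dirich n (-x) = dirich n x := by
  unfold dirich
  refine Finset.sum_nbij' (fun k => -k) (fun k => -k) ?_ ?_ ?_ ?_ ?_ <;>
    intros <;> simp_all <;> omega

lemma dirich_periodic (n : ℕ) : Function.Periodic (dirich n) (2 * π) := by
  intro x
  unfold dirich
  refine Finset.sum_congr rfl fun k _ => ?_
  push_cast
  rw [mul_add, add_mul, Complex.exp_add, mul_assoc (k : ℂ) (2 * (π : ℂ)) Complex.I,
    Complex.exp_int_mul_two_pi_mul_I, mul_one]

lemma norm_dirich_le (n : ℕ) (x : ℝ) : ‖dirich n x‖ ≤ 2 * n + 1 := by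
  unfold dirich
  calc _ ≤ ∑ k ∈ Finset.Icc (-(n : ℤ)) n, (1 : ℝ) := norm_sum_le_of_le _ fun k _ => by
        rw [show (k : ℂ) * x * Complex.I = ((k * x : ℝ) : ℂ) * Complex.I by push_cast; ring,
          Complex.norm_exp_ofReal_mul_I]
    _ = 2 * n + 1 := by simp; norm_cast; omega

lemma dirich_mul_exp_sub_one (n : ℕ) (x : ℝ) :
    dirich n x * (Complex.exp (x * Complex.I) - 1) =
      Complex.exp (x * Complex.I) ^ (-(n : ℤ)) *
        (Complex.exp (x * Complex.I) ^ (2 * n + 1) - 1) := by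
  set w := Complex.exp (x * Complex.I)
  have hw : w ≠ 0 := Complex.exp_ne_zero _
  have hterm (k : ℤ) : Complex.exp (k * x * Complex.I) = w ^ k := by
    rw [← Complex.exp_int_mul]; ring_nf
  have hgeom : dirich n x = w ^ (-(n : ℤ)) * ∑ j ∈ Finset.range (2 * n + 1), w ^ j := by
    simp only [dirich, hterm, Finset.mul_sum, ← zpow_natCast, ← zpow_add₀ hw]
    refine Finset.sum_nbij' (fun k => (k + n).toNat) (fun j => (j : ℤ) - n) ?_ ?_ ?_ ?_ ?_ <;>
      intros <;> simp_all <;> first | omega | (congr 1; omega)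
  rw [hgeom, mul_assoc, geom_sum_mul]

lemma norm_dirich_mul_abs_sin_le (n : ℕ) (x : ℝ) : ‖dirich n x‖ * |sin (x / 2)| ≤ 1 := by
  have hw : ‖Complex.exp (x * Complex.I)‖ = 1 := Complex.norm_exp_ofReal_mul_I x
  have hden : ‖Complex.exp (x * Complex.I) - 1‖ = 2 * |sin (x / 2)| := by
    rw [mul_comm, Complex.norm_exp_I_mul_ofReal_sub_one, norm_mul, Real.norm_two,
      Real.norm_eq_abs]
  have hnum : ‖Complex.exp (x * Complex.I) ^ (2 * n + 1) - 1‖ ≤ 2 := by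
    refine (norm_sub_le _ _).trans ?_
    rw [norm_pow, hw, one_pow, norm_one]; norm_num
  have key := congrArg norm (dirich_mul_exp_sub_one n x)
  rw [norm_mul, norm_mul, hden, norm_zpow, hw, one_zpow, one_mul] at key
  linarith

lemma norm_dirich_le_pi_div {u : ℝ} (hu₀ : 0 < u) (hu : u ≤ π) (n : ℕ) :
    ‖dirich n u‖ ≤ π / u := by
  have hsin : u / π ≤ |sin (u / 2)| := by
    rw [abs_of_nonneg (sin_nonneg_of_nonneg_of_le_pi (by positivity) (by linarith))]
    convert mul_le_sin (x := u / 2) (by positivity) (by linarith) using 1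
    field_simp
  rw [le_div_iff₀ hu₀]
  calc ‖dirich n u‖ * u = ‖dirich n u‖ * (u / π) * π := by field_simp
    _ ≤ ‖dirich n u‖ * |sin (u / 2)| * π := by gcongr
    _ ≤ 1 * π := by gcongr; exact norm_dirich_mul_abs_sin_le n u
    _ = π := one_mul π

lemma norm_dirich_le_pi_div_add {u : ℝ} (hu₀ : 0 < u) (hu : u < 2 * π) (n : ℕ) :
    ‖dirich n u‖ ≤ π / u + π / (2 * π - u) := by
  have h₁ : 0 < π / u := by positivity
  have h₂ : 0 < π / (2 * π - u) := div_pos pi_pos (by linarith)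
  rcases le_total u π with hle | hle
  · linarith [norm_dirich_le_pi_div hu₀ hle n]
  · have hrefl : dirich n u = dirich n (2 * π - u) := by
      rw [← (dirich_periodic n).sub_eq u, ← dirich_neg, neg_sub]
    rw [hrefl]
    linarith [norm_dirich_le_pi_div (u := 2 * π - u) (by linarith) (by linarith) n]

lemma norm_dirich_node_le (n : ℕ) {s : ℝ} (hs₀ : 0 ≤ s) (hs : s < 2 * π / (2 * n + 1))
    {k : ℕ} (hk : k < 2 * n + 1) :
    ‖dirich n (s + k * (2 * π / (2 * n + 1)))‖ ≤
      (2 * n + 1) * (1 / (k + 1) + 1 / (2 * n + 1 - k)) := by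
  set m : ℝ := 2 * n + 1
  set h := 2 * π / m
  have hm : 0 < m := by positivity
  have hh : 0 < h := by positivity
  have hπ : π = m * h / 2 := by unfold h; field_simp
  have hk' : (k : ℝ) + 1 ≤ m := by unfold m; exact_mod_cast hk
  have hA : 0 < 1 / ((k : ℝ) + 1) := by positivity
  have hB : 0 < 1 / (m - k) := one_div_pos.mpr (by linarith)
  rcases (show k = 0 ∨ k = 2 * n ∨ (1 ≤ k ∧ k + 2 ≤ 2 * n + 1) by omega)
    with hk₀ | hk₁ | ⟨hk₀, hk₁⟩
  · refine (norm_dirich_le n _).trans (le_mul_of_one_le_right hm.le ?_)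
    subst hk₀
    simp only [CharP.cast_eq_zero, zero_add, div_one, sub_zero] at hB ⊢
    linarith
  · refine (norm_dirich_le n _).trans (le_mul_of_one_le_right hm.le ?_)
    have : m - k = 1 := by unfold m; rw [hk₁]; push_cast; ring
    rw [this, div_one]
    linarith
  have hk₀' : (1 : ℝ) ≤ k := by exact_mod_cast hk₀
  have hk₁' : (k : ℝ) + 2 ≤ m := by unfold m; exact_mod_cast hk₁
  have hu₀ : 0 < s + k * h := by positivity
  have hu : s + k * h < 2 * π := by nlinarith
  refine (norm_dirich_le_pi_div_add hu₀ hu n).trans ?_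
  rw [mul_add, mul_one_div, mul_one_div]
  refine add_le_add ?_ ?_
  · rw [div_le_div_iff₀ hu₀ (by linarith), hπ]
    nlinarith [mul_nonneg (mul_pos hm hh).le (sub_nonneg.mpr hk₀'), mul_nonneg hm.le hs₀]
  · rw [div_le_div_iff₀ (by linarith) (by linarith), hπ]
    nlinarith [mul_nonneg (mul_pos hm hh).le (sub_nonneg.mpr hk₁'), mul_lt_mul_of_pos_left hs hm]

lemma Function.Periodic.sum_range_add_nsmul {α M : Type*} [AddCommMonoid α] [AddCommMonoid M]
    {g : α → M} {h : α} {m : ℕ} (hg : Function.Periodic g (m • h)) :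
    Function.Periodic (fun y => ∑ k ∈ Finset.range m, g (y + k • h)) h := by
  intro y
  cases m with
  | zero => simp
  | succ m =>
    dsimp only
    rw [Finset.sum_range_succ, Finset.sum_range_succ', zero_smul, add_zero, ← hg y]
    simp only [succ_nsmul, add_assoc, add_comm h]

lemma sum_range_one_div_add_one_div_le (m : ℕ) :
    ∑ k ∈ Finset.range m, (1 / ((k : ℝ) + 1) + 1 / ((m : ℝ) - k)) ≤ 2 * (1 + log m) := by
  have hreflect : ∑ k ∈ Finset.range m, 1 / ((m : ℝ) - k) =
      ∑ k ∈ Finset.range m, 1 / ((k : ℝ) + 1) := by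
    rw [← Finset.sum_range_reflect]
    refine Finset.sum_congr rfl fun k hk => ?_
    rw [Finset.mem_range] at hk
    rw [Nat.cast_sub (by omega), Nat.cast_sub (by omega)]
    ring_nf
  have hharmonic : ∑ k ∈ Finset.range m, 1 / ((k : ℝ) + 1) = harmonic m := by
    simp [harmonic]
  rw [Finset.sum_add_distrib, hreflect, hharmonic]
  linarith [harmonic_le_one_add_log m]

lemma sum_norm_dirich_nodes_le (n : ℕ) (x : ℝ) :
    ∑ j ∈ Finset.range (2 * n + 1), ‖dirich n (x - 2 * π * j / (2 * n + 1))‖ ≤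
      (2 * n + 1) * (2 * (1 + log (2 * n + 1))) := by
  set h := 2 * π / (2 * n + 1)
  have hh : 0 < h := by positivity
  have hperiod : Function.Periodic (fun y => ∑ k ∈ Finset.range (2 * n + 1),
      ‖dirich n (y + k * h)‖) h := by
    have : Function.Periodic (fun y => ‖dirich n y‖) ((2 * n + 1 : ℕ) • h) := by
      rw [nsmul_eq_mul,
        show ((2 * n + 1 : ℕ) : ℝ) * h = 2 * π by unfold h; push_cast; field_simp]
      exact fun y => congrArg norm (dirich_periodic n y)
    simpa only [nsmul_eq_mul] using this.sum_range_add_nsmul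
  obtain ⟨s, ⟨hs₀, hs⟩, hs_eq⟩ := hperiod.exists_mem_Ico₀ hh (-x)
  have hnodes : ∀ j : ℕ, dirich n (x - 2 * π * j / (2 * n + 1)) = dirich n (-x + j * h) := by
    intro j
    rw [← dirich_neg]; congr 1; unfold h; ring
  simp only [hnodes]
  rw [hs_eq]
  calc ∑ k ∈ Finset.range (2 * n + 1), ‖dirich n (s + k * h)‖
      ≤ ∑ k ∈ Finset.range (2 * n + 1),
          (2 * n + 1) * (1 / ((k : ℝ) + 1) + 1 / (2 * n + 1 - k)) :=
        Finset.sum_le_sum fun k hk => norm_dirich_node_le n hs₀ hs (Finset.mem_range.mp hk)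
    _ ≤ (2 * n + 1) * (2 * (1 + log (2 * n + 1))) := by
      rw [← Finset.mul_sum]
      gcongr
      exact_mod_cast sum_range_one_div_add_one_div_le (2 * n + 1)

lemma sum_exp_int_mul_nodes {m : ℕ} (hm : m ≠ 0) {d : ℤ} (hd : |d| < m) :
    ∑ j ∈ Finset.range m, Complex.exp (d * ((2 * π * j / m : ℝ) : ℂ) * Complex.I) =
      if d = 0 then (m : ℂ) else 0 := by
  set ζ := Complex.exp (2 * π * Complex.I / m)
  have hζ : IsPrimitiveRoot ζ m := Complex.isPrimitiveRoot_exp m hm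
  have hterm (j : ℕ) :
      Complex.exp (d * ((2 * π * j / m : ℝ) : ℂ) * Complex.I) = (ζ ^ d) ^ j := by
    rw [← zpow_natCast, ← zpow_mul, ← Complex.exp_int_mul]
    congr 1; push_cast; ring
  simp only [hterm]
  split_ifs with hd₀
  · simp [hd₀]
  have hne : ζ ^ d ≠ 1 := fun h =>
    hd₀ (Int.eq_zero_of_abs_lt_dvd ((hζ.zpow_eq_one_iff_dvd d).mp h) hd)
  have hpow : (ζ ^ d) ^ m = 1 := by
    rw [← zpow_natCast, ← zpow_mul, mul_comm, zpow_mul, zpow_natCast, hζ.pow_eq_one, one_zpow]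
  have := geom_sum_mul (ζ ^ d) m
  rw [hpow, sub_self] at this
  exact (mul_eq_zero.mp this).resolve_right (sub_ne_zero.mpr hne)

lemma interp_exp (n : ℕ) {k : ℤ} (hk : k ∈ Finset.Icc (-(n : ℤ)) n) (x : ℝ) :
    interp n (fun y => Complex.exp (k * y * Complex.I)) x = Complex.exp (k * x * Complex.I) := by
  rw [Finset.mem_Icc] at hk
  have hm : ((2 * n + 1 : ℕ) : ℝ) = 2 * n + 1 := by push_cast; ring
  have hfactor (j : ℕ) (l : ℤ) :
      Complex.exp (k * ((2 * π * j / (2 * n + 1) : ℝ) : ℂ) * Complex.I) *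
        Complex.exp (l * ((x - 2 * π * j / (2 * n + 1) : ℝ) : ℂ) * Complex.I) =
      Complex.exp (l * x * Complex.I) *
        Complex.exp (((k - l : ℤ) : ℂ) * ((2 * π * j / (2 * n + 1 : ℕ) : ℝ) : ℂ) *
          Complex.I) := by
    rw [← Complex.exp_add, ← Complex.exp_add, hm]; congr 1; push_cast; ring
  have hdelta (l : ℤ) (hl : l ∈ Finset.Icc (-(n : ℤ)) n) :
      ∑ j ∈ Finset.range (2 * n + 1), Complex.exp (((k - l : ℤ) : ℂ) *
        ((2 * π * j / (2 * n + 1 : ℕ) : ℝ) : ℂ) * Complex.I) =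
      if l = k then ((2 * n + 1 : ℕ) : ℂ) else 0 := by
    rw [Finset.mem_Icc] at hl
    rw [sum_exp_int_mul_nodes (by omega) (by rw [abs_lt]; push_cast; omega)]
    simp only [sub_eq_zero, eq_comm]
  unfold interp dirich
  simp only [Finset.mul_sum, hfactor]
  rw [Finset.sum_comm]
  simp only [← Finset.mul_sum]
  rw [Finset.sum_congr rfl fun l hl => by rw [hdelta l hl]]
  simp only [mul_ite, mul_zero, Finset.sum_ite_eq', Finset.mem_Icc, hk, and_self, if_true]
  have : (2 * (n : ℂ) + 1) ≠ 0 := by exact_mod_cast (by positivity : (2 * (n : ℝ) + 1) ≠ 0)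
  push_cast
  field_simp

lemma interp_eq_self_of_mem_trigPoly {n : ℕ} {t : ℝ → ℂ} (ht : t ∈ TrigPoly n) (x : ℝ) :
    interp n t x = t x := by
  obtain ⟨c, hc⟩ := ht
  have hlinear : interp n t x = ∑ k ∈ Finset.Icc (-(n : ℤ)) n,
      c k * interp n (fun y => Complex.exp (k * y * Complex.I)) x := by
    unfold interp
    simp only [hc, Finset.sum_mul, Finset.mul_sum]
    rw [Finset.sum_comm]
    exact Finset.sum_congr rfl fun k _ => Finset.sum_congr rfl fun j _ => by ring
  rw [hlinear, hc x]
  exact Finset.sum_congr rfl fun k hk => by rw [interp_exp n hk x]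

lemma interp_sub (n : ℕ) (f g : ℝ → ℂ) (x : ℝ) :
    interp n (fun y => f y - g y) x = interp n f x - interp n g x := by
  simp only [interp, ← mul_sub, ← Finset.sum_sub_distrib, sub_mul]

lemma enorm_le_supNorm (g : ℝ → ℂ) (x : ℝ) : ‖g x‖ₑ ≤ supNorm g :=
  le_iSup (fun y => ‖g y‖ₑ) x

lemma enorm_interp_le (n : ℕ) (g : ℝ → ℂ) (x : ℝ) :
    ‖interp n g x‖ₑ ≤ ENNReal.ofReal (2 * (1 + log (2 * n + 1))) * supNorm g := by
  set m : ℝ := 2 * n + 1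
  have hm : 0 < m := by positivity
  have hlebesgue : ‖((m⁻¹ : ℝ) : ℂ)‖ₑ * ∑ j ∈ Finset.range (2 * n + 1),
      ‖dirich n (x - 2 * π * j / m)‖ₑ ≤ ENNReal.ofReal (2 * (1 + log m)) := by
    simp_rw [← ofReal_norm]
    rw [← ENNReal.ofReal_sum_of_nonneg fun _ _ => norm_nonneg _,
      ← ENNReal.ofReal_mul (norm_nonneg _)]
    refine ENNReal.ofReal_le_ofReal ?_
    rw [Complex.norm_real, Real.norm_of_nonneg (by positivity), inv_mul_le_iff₀ hm]
    exact sum_norm_dirich_nodes_le n x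
  unfold interp
  calc _ ≤ ‖((m⁻¹ : ℝ) : ℂ)‖ₑ * ∑ j ∈ Finset.range (2 * n + 1),
        supNorm g * ‖dirich n (x - 2 * π * j / m)‖ₑ := by
        rw [enorm_mul]
        gcongr
        refine (enorm_sum_le _ _).trans (Finset.sum_le_sum fun j _ => ?_)
        rw [enorm_mul]
        gcongr
        exact enorm_le_supNorm g _
    _ ≤ _ := by
        rw [← Finset.mul_sum, mul_left_comm, mul_comm]
        gcongr

lemma supNorm_sub_interp_le (n : ℕ) (f : ℝ → ℂ) {t : ℝ → ℂ} (ht : t ∈ TrigPoly n) :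
    supNorm (fun x => f x - interp n f x) ≤
      ENNReal.ofReal (3 + 2 * log (2 * n + 1)) * supNorm (fun x => f x - t x) := by
  refine iSup_le fun x => ?_
  have hsplit : f x - interp n f x = (f x - t x) - interp n (fun y => f y - t y) x := by
    rw [interp_sub, interp_eq_self_of_mem_trigPoly ht]; ring
  have hconst : ENNReal.ofReal (3 + 2 * log (2 * n + 1)) =
      1 + ENNReal.ofReal (2 * (1 + log (2 * n + 1))) := by
    have : 0 ≤ log (2 * n + 1) := log_nonneg (by linarith [(n.cast_nonneg : (0 : ℝ) ≤ n)])
    rw [← ENNReal.ofReal_one, ← ENNReal.ofReal_add zero_le_one (by positivity)]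
    ring_nf
  calc (‖f x - interp n f x‖₊ : ℝ≥0∞)
        = ‖(f x - t x) - interp n (fun y => f y - t y) x‖ₑ := by
        rw [hsplit]; rfl
    _ ≤ ‖f x - t x‖ₑ + ‖interp n (fun y => f y - t y) x‖ₑ := enorm_sub_le
    _ ≤ supNorm (fun x => f x - t x) +
        ENNReal.ofReal (2 * (1 + log (2 * n + 1))) * supNorm (fun x => f x - t x) :=
        add_le_add (enorm_le_supNorm (fun x => f x - t x) x) (enorm_interp_le n _ x)
    _ = _ := by rw [hconst, add_mul, one_mul]

lemma log_two_mul_add_one_le (n : ℕ) : log (2 * n + 1) ≤ 2 * log (n + 1) := by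
  rw [show 2 * log (n + 1) = log ((n + 1) ^ 2) by rw [log_pow]; norm_num]
  exact log_le_log (by positivity) (by nlinarith [(n.cast_nonneg : (0 : ℝ) ≤ n)])

/-- Lebesgue inequality for trigonometric interpolation. There is an
absolute constant `C` such that for all `n ≥ 1` and every continuous `2π`-periodic `f`,
`‖f − I_n(f)‖_∞ ≤ C ln(n+1) E_n(f)_∞`. -/
theorem statement16 :
    ∃ C : ℝ, 0 < C ∧ ∀ n : ℕ, 1 ≤ n → ∀ f : ℝ → ℂ,
      Continuous f → Function.Periodic f (2 * Real.pi) →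
      supNorm (fun x => f x - interp n f x) ≤
        ENNReal.ofReal (C * Real.log ((n : ℝ) + 1)) *
          ⨅ t ∈ TrigPoly n, supNorm (fun x => f x - t x) := by
  refine ⟨10, by norm_num, fun n hn f _ _ => ?_⟩
  have hlog : 1 / 2 < log (n + 1) := by
    have : log 2 ≤ log (n + 1) := log_le_log two_pos (by exact_mod_cast Nat.succ_le_succ hn)
    linarith [log_two_gt_d9]
  have hconst : 3 + 2 * log (2 * n + 1) ≤ 10 * log (n + 1) := by
    linarith [log_two_mul_add_one_le n]
  have hC : ENNReal.ofReal (10 * log (n + 1)) ≠ 0 := by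
    rw [ne_eq, ENNReal.ofReal_eq_zero, not_le]; linarith
  simp only [ENNReal.mul_iInf_of_ne hC ENNReal.ofReal_ne_top]
  refine le_iInf₂ fun t ht => (supNorm_sub_interp_le n f ht).trans ?_
  gcongr

end
end
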